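/- arXiv:gr-qc/9306021 — 2 statements merged into one kernel-verified Lean document; each statement's English description precedes it below -/
import Mathlib

section
/- Let a : [0,T_a) → (0,∞) be the right-maximal solution of the ordinary differential equation a''(t) + (4π/3) a(t)⁻² = 0 with a(0) = 1, and assume a'(0) ≥ √(8π/3) (Case A). Then T_a = ∞, i.e. the solution exists on all of [0,∞), and a'(t) > 0 for all t ≥ 0. -/
/-!
The energy `a'² - (8π/3) / a` is conserved along solutions, and in Case A it is nonnegative at
`t = 0`. Hence `a'` never vanishes and stays positive; since `a'' < 0`, it also decreases, so
`a ≥ a 0 = 1` and `0 < a' ≤ a'(0)` on `[0, T_a)`. If `T_a` were finite, these bounds would give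
the first-order system `(a, a')' = (a', -(4π/3) / a²)` an existence time independent of the
starting point. Starting close enough to `T_a` and gluing then produces a solution beyond `T_a`,
contradicting maximality.
-/

open MeasureTheory Real Set Filter
open scoped ENNReal RealInnerProductSpace

noncomputable section

/-- The time domain `[0, T)`, where `T` may be `∞`. -/
def Dom (T : ℝ≥0∞) : Set ℝ := {t : ℝ | 0 ≤ t ∧ ENNReal.ofReal t < T}

/-- `a` is a positive `C²` solution of `a'' + (4π/3) a⁻² = 0` on the set `s`. -/
def SolvesScaleODE (a : ℝ → ℝ) (s : Set ℝ) : Prop :=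
  (∀ t ∈ s, 0 < a t) ∧ ContDiffOn ℝ 2 a s ∧
  ∀ t ∈ s, deriv (deriv a) t + (4 * π / 3) * (a t ^ 2)⁻¹ = 0

/-- `a` is a right-maximal solution of `a'' + (4π/3) a⁻² = 0` on `[0, Ta)` with `a 0 = 1`:
no solution on a strictly larger interval `[0, Tb)` agrees with `a` on `[0, Ta)`. -/
def IsMaxScaleSol (a : ℝ → ℝ) (Ta : ℝ≥0∞) : Prop :=
  0 < Ta ∧ a 0 = 1 ∧ SolvesScaleODE a (Dom Ta) ∧
  ∀ (b : ℝ → ℝ) (Tb : ℝ≥0∞), Ta < Tb → Set.EqOn b a (Dom Ta) →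
    ¬ SolvesScaleODE b (Dom Tb)

open scoped NNReal Topology

lemma dom_ofReal (T : ℝ) : Dom (ENNReal.ofReal T) = Ico 0 T := by
  ext t
  simp only [Dom, mem_ofPred_eq, mem_Ico, ENNReal.ofReal_lt_ofReal_iff']
  exact and_congr_right fun h0 => ⟨And.left, fun h => ⟨h, h0.trans_lt h⟩⟩

lemma dom_top : Dom ⊤ = Ici 0 := by
  ext t
  simp [Dom]

def scaleEnergy (a : ℝ → ℝ) (t : ℝ) : ℝ := deriv a t ^ 2 - 8 * π / 3 / a t

namespace SolvesScaleODE

variable {a : ℝ → ℝ} {s : Set ℝ} {t T : ℝ}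

lemma mono {s' : Set ℝ} (h : SolvesScaleODE a s) (hs : s' ⊆ s) : SolvesScaleODE a s' :=
  ⟨fun t ht => h.1 t (hs ht), h.2.1.mono hs, fun t ht => h.2.2 t (hs ht)⟩

lemma hasDerivAt_deriv (h : SolvesScaleODE a s) (ht : t ∈ s) :
    HasDerivAt (deriv a) (-(4 * π / 3) / a t ^ 2) t := by
  have hdd : deriv (deriv a) t = -(4 * π / 3) / a t ^ 2 := by
    rw [neg_div, div_eq_mul_inv]
    linarith [h.2.2 t ht]
  have hne : deriv (deriv a) t ≠ 0 := by
    have := h.1 t ht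
    rw [hdd, neg_div]
    exact neg_ne_zero.mpr (by positivity)
  exact hdd ▸ (differentiableAt_of_deriv_ne_zero hne).hasDerivAt

lemma differentiableAt (h : SolvesScaleODE a s) (hs : s ∈ 𝓝 t) : DifferentiableAt ℝ a t :=
  (h.2.1.differentiableOn (by norm_num)).differentiableAt hs

/-- `ContDiffOn` on `Ico 0 T` says nothing about `a` to the left of `0`; two-sided
differentiability at `0` comes from `deriv a 0 ≠ 0`, `deriv` being `0` where it fails. -/
lemma hasDerivAt_of_mem_Ico (h : SolvesScaleODE a (Ico 0 T)) (h0 : deriv a 0 ≠ 0)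
    (ht : t ∈ Ico 0 T) : HasDerivAt a (deriv a t) t := by
  rcases ht.1.eq_or_lt with rfl | ht0
  · exact (differentiableAt_of_deriv_ne_zero h0).hasDerivAt
  · exact (h.differentiableAt (Ico_mem_nhds ht0 ht.2)).hasDerivAt

lemma scaleEnergy_eq (h : SolvesScaleODE a (Ico 0 T)) (h0 : deriv a 0 ≠ 0)
    (ht : t ∈ Ico 0 T) : scaleEnergy a t = scaleEnergy a 0 := by
  have hE : ∀ u ∈ Ico 0 T, HasDerivAt (scaleEnergy a) 0 u := by
    intro u hu
    have hau := (h.1 u hu).ne'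
    refine (((h.hasDerivAt_deriv hu).fun_pow 2).fun_sub ((hasDerivAt_const u (8 * π / 3)).fun_div
      (h.hasDerivAt_of_mem_Ico h0 hu) hau)).congr_deriv ?_
    field_simp
    ring
  have hsub : Icc 0 t ⊆ Ico 0 T := Icc_subset_Ico_right ht.2
  exact constant_of_has_deriv_right_zero
    (fun u hu => (hE u (hsub hu)).continuousAt.continuousWithinAt)
    (fun u hu => (hE u (hsub (Ico_subset_Icc_self hu))).hasDerivWithinAt) t ⟨ht.1, le_rfl⟩

lemma deriv_pos (h : SolvesScaleODE a (Ico 0 T)) (h0 : 0 < deriv a 0)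
    (hE : 0 ≤ scaleEnergy a 0) (ht : t ∈ Ico 0 T) : 0 < deriv a t := by
  have hne : ∀ u ∈ Ico 0 T, deriv a u ≠ 0 := by
    intro u hu hu0
    have hEu := h.scaleEnergy_eq h0.ne' hu
    have := h.1 u hu
    simp only [scaleEnergy, hu0] at hEu hE
    have : 0 < 8 * π / 3 / a u := by positivity
    linarith
  by_contra! hle
  obtain ⟨u, hu, hu0⟩ := isPreconnected_Ico.intermediate_value ht ⟨le_rfl, ht.1.trans_lt ht.2⟩
    (fun u hu => (h.hasDerivAt_deriv hu).continuousAt.continuousWithinAt) ⟨hle, h0.le⟩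
  exact hne u hu hu0

lemma antitoneOn_deriv (h : SolvesScaleODE a (Ico 0 T)) : AntitoneOn (deriv a) (Ico 0 T) :=
  antitoneOn_of_hasDerivWithinAt_nonpos (convex_Ico 0 T)
    (fun _ hu => (h.hasDerivAt_deriv hu).continuousAt.continuousWithinAt)
    (fun _ hu => (h.hasDerivAt_deriv (interior_subset hu)).hasDerivWithinAt)
    fun _ _ => div_nonpos_of_nonpos_of_nonneg (neg_nonpos.mpr (by positivity)) (sq_nonneg _)

lemma monotoneOn (h : SolvesScaleODE a (Ico 0 T)) (h0 : 0 < deriv a 0)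
    (hE : 0 ≤ scaleEnergy a 0) : MonotoneOn a (Ico 0 T) :=
  monotoneOn_of_hasDerivWithinAt_nonneg (convex_Ico 0 T)
    (fun _ hu => (h.hasDerivAt_of_mem_Ico h0.ne' hu).continuousAt.continuousWithinAt)
    (fun _ hu => (h.hasDerivAt_of_mem_Ico h0.ne' (interior_subset hu)).hasDerivWithinAt)
    (fun _ hu => (h.deriv_pos h0 hE (interior_subset hu)).le)

end SolvesScaleODE

def scaleField (p : ℝ × ℝ) : ℝ × ℝ := (p.2, -(4 * π / 3) / p.1 ^ 2)

def truncScaleField (c M : ℝ) (p : ℝ × ℝ) : ℝ × ℝ :=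
  scaleField (max p.1 c, max (min p.2 M) (-M))

lemma truncScaleField_eq {c M : ℝ} {p : ℝ × ℝ} (h1 : c ≤ p.1) (h2 : |p.2| ≤ M) :
    truncScaleField c M p = scaleField p := by
  rw [truncScaleField, max_eq_left h1, min_eq_left (abs_le.mp h2).2,
    max_eq_left (abs_le.mp h2).1]

lemma norm_scaleField_le {c M : ℝ} (hc : 0 < c) {p : ℝ × ℝ} (h1 : c ≤ p.1) (h2 : |p.2| ≤ M) :
    ‖scaleField p‖ ≤ max M (4 * π / 3 / c ^ 2) := by
  have hp : 0 < p.1 := hc.trans_le h1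
  rw [scaleField, Prod.norm_mk]
  refine max_le_max h2 ?_
  rw [Real.norm_eq_abs, abs_div, abs_neg, abs_of_pos (by positivity), abs_of_pos (by positivity)]
  gcongr

lemma norm_truncScaleField_le {c M : ℝ} (hc : 0 < c) (hM : 0 ≤ M) (p : ℝ × ℝ) :
    ‖truncScaleField c M p‖ ≤ max M (4 * π / 3 / c ^ 2) :=
  norm_scaleField_le hc (le_max_right _ _)
    (abs_le.mpr ⟨le_max_right _ _, max_le (min_le_right _ _) (by linarith)⟩)

lemma lipschitzOnWith_neg_div_sq {k c : ℝ} (hk : 0 ≤ k) (hc : 0 < c) :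
    LipschitzOnWith (Real.toNNReal (2 * k / c ^ 3)) (fun x => -k / x ^ 2) (Ici c) := by
  refine (convex_Ici c).lipschitzOnWith_of_nnnorm_hasDerivWithin_le
    (f' := fun x => 2 * k / x ^ 3) (fun x hx => ?_) (fun x hx => ?_)
  · have hx0 : x ≠ 0 := (hc.trans_le hx).ne'
    refine ((hasDerivAt_const x (-k)).div (hasDerivAt_pow 2 x) (pow_ne_zero 2 hx0))
      |>.hasDerivWithinAt.congr_deriv ?_
    field_simp
    ring
  · have hx0 : 0 < x := hc.trans_le hx
    rw [← NNReal.coe_le_coe, coe_nnnorm, Real.norm_eq_abs, abs_of_nonneg (by positivity),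
      Real.coe_toNNReal _ (by positivity)]
    gcongr
    exact hx

lemma exists_lipschitzWith_truncScaleField {c : ℝ} (hc : 0 < c) (M : ℝ) :
    ∃ K, LipschitzWith K (truncScaleField c M) := by
  have hclamp : LipschitzWith 1 fun p : ℝ × ℝ => (max p.1 c, max (min p.2 M) (-M)) := by
    simpa using (LipschitzWith.prod_fst.max_const c).prodMk
      ((LipschitzWith.prod_snd.min_const M).max_const (-M))
  have hfield : LipschitzOnWith _ scaleField {p : ℝ × ℝ | c ≤ p.1} :=
    LipschitzWith.prod_snd.lipschitzOnWith.prodMk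
      ((lipschitzOnWith_neg_div_sq (by positivity) hc).comp
        LipschitzWith.prod_fst.lipschitzOnWith fun p hp => hp)
  exact ⟨_, lipschitzOnWith_univ.mp (hfield.comp hclamp.lipschitzOnWith
    fun p _ => le_max_right p.1 c)⟩

theorem exists_integralCurve_of_lipschitzWith {E : Type*} [NormedAddCommGroup E]
    [NormedSpace ℝ E] [CompleteSpace E] {F : E → E} {K : ℝ≥0} {L : ℝ}
    (hF : LipschitzWith K F) (hL : ∀ x, ‖F x‖ ≤ L) (x₀ : E) {t₀ δ : ℝ} (hδ : 0 ≤ δ) :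
    ∃ α : ℝ → E, α t₀ = x₀ ∧ ∀ t ∈ Icc t₀ (t₀ + δ),
      HasDerivWithinAt α (F (α t)) (Icc t₀ (t₀ + δ)) t ∧ ‖α t - x₀‖ ≤ L * (t - t₀) := by
  have hL0 : 0 ≤ L := (norm_nonneg _).trans (hL x₀)
  have hPL : IsPicardLindelof (fun _ => F) (tmin := t₀) (tmax := t₀ + δ)
      ⟨t₀, le_rfl, by linarith⟩ x₀ (L * δ).toNNReal 0 L.toNNReal K :=
    { lipschitzOnWith := fun _ _ => hF.lipschitzOnWith
      continuousOn := fun _ _ => continuousOn_const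
      norm_le := fun _ _ x _ => by rw [Real.coe_toNNReal _ hL0]; exact hL x
      mul_max_le := by
        rw [Real.coe_toNNReal _ hL0, Real.coe_toNNReal _ (by positivity)]
        simp [hδ] }
  obtain ⟨α, hα₀, hα⟩ := hPL.exists_eq_forall_mem_Icc_hasDerivWithinAt₀
  refine ⟨α, hα₀, fun t ht => ⟨hα t ht, ?_⟩⟩
  simpa [hα₀] using norm_image_sub_le_of_norm_deriv_le_segment' hα (fun s _ => hL (α s)) t ht

theorem exists_integralCurve_truncScaleField {m M : ℝ} (hm : 0 < m) (hM : 0 ≤ M) :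
    ∃ δ > 0, ∀ (t₀ : ℝ) (x₀ : ℝ × ℝ), m ≤ x₀.1 → |x₀.2| ≤ M →
      ∃ α : ℝ → ℝ × ℝ, α t₀ = x₀ ∧ ∀ t ∈ Icc t₀ (t₀ + δ),
        HasDerivWithinAt α (truncScaleField (m / 2) (M + m / 2) (α t)) (Icc t₀ (t₀ + δ)) t ∧
        m / 2 ≤ (α t).1 ∧ |(α t).2| ≤ M + m / 2 := by
  set L := max (M + m / 2) (4 * π / 3 / (m / 2) ^ 2)
  have hL : 0 < L := lt_max_of_lt_left (by positivity)
  obtain ⟨K, hK⟩ := exists_lipschitzWith_truncScaleField (half_pos hm) (M + m / 2)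
  have hδ : 0 < m / 2 / L := by positivity
  refine ⟨m / 2 / L, hδ, fun t₀ x₀ hx₁ hx₂ => ?_⟩
  obtain ⟨α, hα₀, hα⟩ := exists_integralCurve_of_lipschitzWith hK
    (norm_truncScaleField_le (half_pos hm) (by positivity)) x₀ (t₀ := t₀) hδ.le
  refine ⟨α, hα₀, fun t ht => ⟨(hα t ht).1, ?_⟩⟩
  -- the existence time `m / 2 / L` keeps the curve within `m / 2` of its initial point
  have hclose : ‖α t - x₀‖ ≤ m / 2 := (hα t ht).2.trans <| by
    calc L * (t - t₀) ≤ L * (m / 2 / L) := by gcongr; linarith [ht.2]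
      _ = m / 2 := by field_simp
  rw [Prod.norm_def, max_le_iff, Prod.fst_sub, Prod.snd_sub, Real.norm_eq_abs,
    Real.norm_eq_abs] at hclose
  constructor
  · linarith [(abs_le.mp hclose.1).1]
  · calc |(α t).2| = |x₀.2 + ((α t).2 - x₀.2)| := by ring_nf
      _ ≤ |x₀.2| + |(α t).2 - x₀.2| := abs_add_le _ _
      _ ≤ M + m / 2 := add_le_add hx₂ hclose.2

theorem solvesScaleODE_fst {γ : ℝ → ℝ × ℝ} {U : Set ℝ} (hU : IsOpen U)
    (hγ : ∀ t ∈ U, HasDerivAt γ (scaleField (γ t)) t) (hpos : ∀ t ∈ U, 0 < (γ t).1) :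
    SolvesScaleODE (fun t => (γ t).1) U := by
  have h₁ : ∀ t ∈ U, HasDerivAt (fun s => (γ s).1) (γ t).2 t := fun t ht => (hγ t ht).fst
  have h₂ : ∀ t ∈ U, HasDerivAt (fun s => (γ s).2) (-(4 * π / 3) / (γ t).1 ^ 2) t :=
    fun t ht => (hγ t ht).snd
  have hd₁ : EqOn (deriv fun s => (γ s).1) (fun s => (γ s).2) U := fun t ht => (h₁ t ht).deriv
  have hC₁ : ContDiffOn ℝ 1 (fun s => (γ s).2) U := by
    rw [show (1 : WithTop ℕ∞) = 0 + 1 from rfl, contDiffOn_succ_iff_deriv_of_isOpen hU]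
    refine ⟨fun t ht => (h₂ t ht).differentiableAt.differentiableWithinAt, by simp, ?_⟩
    refine contDiffOn_zero.mpr (ContinuousOn.congr ?_ fun t ht => (h₂ t ht).deriv)
    exact continuousOn_const.div ((HasDerivAt.continuousOn h₁).pow 2)
      fun t ht => pow_ne_zero 2 (hpos t ht).ne'
  refine ⟨hpos, ?_, fun t ht => ?_⟩
  · rw [show (2 : WithTop ℕ∞) = 1 + 1 from rfl, contDiffOn_succ_iff_deriv_of_isOpen hU]
    exact ⟨fun t ht => (h₁ t ht).differentiableAt.differentiableWithinAt, by simp,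
      hC₁.congr hd₁⟩
  · rw [(hd₁.eventuallyEq_of_mem (hU.mem_nhds ht)).deriv_eq, (h₂ t ht).deriv, neg_div,
      div_eq_mul_inv]
    ring

namespace SolvesScaleODE

variable {a : ℝ → ℝ} {s : Set ℝ} {t T : ℝ}

lemma hasDerivAt_phase (h : SolvesScaleODE a s) (hs : s ∈ 𝓝 t) :
    HasDerivAt (fun u => (a u, deriv a u)) (scaleField (a t, deriv a t)) t :=
  (h.differentiableAt hs).hasDerivAt.prodMk (h.hasDerivAt_deriv (mem_of_mem_nhds hs))

theorem eqOn_of_integralCurve (h : SolvesScaleODE a (Ico 0 T)) {c M t₀ t₁ : ℝ}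
    (hlow : ∀ t ∈ Ico 0 T, c ≤ a t) (hbd : ∀ t ∈ Ico 0 T, |deriv a t| ≤ M) (hc : 0 < c)
    (ht₀ : 0 < t₀) (hT : T ≤ t₁) {α : ℝ → ℝ × ℝ}
    (hα : ∀ t ∈ Icc t₀ t₁, HasDerivWithinAt α (truncScaleField c M (α t)) (Icc t₀ t₁) t)
    (hα₀ : α t₀ = (a t₀, deriv a t₀)) :
    EqOn (fun t => (a t, deriv a t)) α (Ico t₀ T) := by
  intro t ht
  obtain ⟨K, hK⟩ := exists_lipschitzWith_truncScaleField hc M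
  have hsub : Icc t₀ t ⊆ Icc t₀ t₁ := Icc_subset_Icc_right (ht.2.le.trans hT)
  have hphase : ∀ u ∈ Icc t₀ t, HasDerivAt (fun u => (a u, deriv a u))
      (truncScaleField c M (a u, deriv a u)) u := by
    intro u hu
    have hu' : u ∈ Ico 0 T := ⟨ht₀.le.trans hu.1, hu.2.trans_lt ht.2⟩
    rw [truncScaleField_eq (hlow u hu') (hbd u hu')]
    exact h.hasDerivAt_phase (Ico_mem_nhds (ht₀.trans_le hu.1) hu'.2)
  refine ODE_solution_unique (v := fun _ => truncScaleField c M) (fun _ => hK)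
    (HasDerivAt.continuousOn hphase)
    (fun u hu => (hphase u (Ico_subset_Icc_self hu)).hasDerivWithinAt)
    ((HasDerivWithinAt.continuousOn hα).mono hsub)
    (fun u hu => (hα u (hsub (Ico_subset_Icc_self hu))).mono_of_mem_nhdsWithin
      (Icc_mem_nhdsGE_of_mem ⟨hu.1, hu.2.trans_le (ht.2.le.trans hT)⟩))
    hα₀.symm ⟨ht.1, le_rfl⟩

theorem of_forall_eventuallyEq {b : ℝ → ℝ}
    (hloc : ∀ t ∈ s, ∃ c u, SolvesScaleODE c u ∧ t ∈ u ∧ s =ᶠ[𝓝 t] u ∧ b =ᶠ[𝓝 t] c) :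
    SolvesScaleODE b s := by
  refine ⟨fun t ht => ?_, fun t ht => ?_, fun t ht => ?_⟩ <;>
    obtain ⟨c, u, hc, htu, hsu, hbc⟩ := hloc t ht
  · exact hbc.eq_of_nhds ▸ hc.1 t htu
  · exact ((hc.2.1 t htu).congr_set hsu.symm).congr_of_eventuallyEq
      (hbc.filter_mono nhdsWithin_le_nhds) hbc.eq_of_nhds
  · rw [hbc.deriv.deriv_eq, hbc.eq_of_nhds]
    exact hc.2.2 t htu

theorem glue {c : ℝ → ℝ} {t₀ T' : ℝ} (ha : SolvesScaleODE a (Ico 0 T))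
    (hc : SolvesScaleODE c (Ioo t₀ T')) (ht₀ : 0 < t₀) (ht₀T : t₀ < T) (hTT' : T < T')
    (hac : EqOn a c (Ioo t₀ T)) :
    SolvesScaleODE (fun t => if t < T then a t else c t) (Ico 0 T') := by
  refine of_forall_eventuallyEq fun t ht => ?_
  rcases lt_or_ge t T with htT | hTt
  · refine ⟨a, Ico 0 T, ha, ⟨ht.1, htT⟩, ?_, ?_⟩
    · filter_upwards [Iio_mem_nhds htT] with u hu
      exact eq_iff_iff.mpr ⟨fun hu' => ⟨hu'.1, hu⟩, fun hu' => ⟨hu'.1, hu'.2.trans hTT'⟩⟩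
    · filter_upwards [Iio_mem_nhds htT] with u hu using if_pos hu
  · have htc : t ∈ Ioo t₀ T' := ⟨ht₀T.trans_le hTt, ht.2⟩
    refine ⟨c, Ioo t₀ T', hc, htc, ?_, ?_⟩
    · filter_upwards [Ioo_mem_nhds (ht₀.trans htc.1) ht.2, isOpen_Ioo.mem_nhds htc] with u hu hu'
      exact eq_iff_iff.mpr ⟨fun _ => hu', fun _ => Ioo_subset_Ico_self hu⟩
    · filter_upwards [Ioi_mem_nhds htc.1] with u hu
      by_cases huT : u < T
      · rw [if_pos huT, hac ⟨hu, huT⟩]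
      · rw [if_neg huT]

theorem exists_extension (h : SolvesScaleODE a (Ico 0 T)) {m M : ℝ} (hT : 0 < T) (hm : 0 < m)
    (hlow : ∀ t ∈ Ico 0 T, m ≤ a t) (hbd : ∀ t ∈ Ico 0 T, |deriv a t| ≤ M) :
    ∃ b T', T < T' ∧ EqOn b a (Ico 0 T) ∧ SolvesScaleODE b (Ico 0 T') := by
  have hM : 0 ≤ M := (abs_nonneg _).trans (hbd 0 ⟨le_rfl, hT⟩)
  obtain ⟨δ, hδ, hex⟩ := exists_integralCurve_truncScaleField hm hM
  -- start close enough to `T` that the uniform existence time `δ` reaches beyond it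
  set t₀ := max (T / 2) (T - δ / 2)
  have ht₀ : 0 < t₀ := lt_max_of_lt_left (half_pos hT)
  have ht₀T : t₀ < T := max_lt (half_lt_self hT) (by linarith)
  have hTδ : T < t₀ + δ := by linarith [le_max_right (T / 2) (T - δ / 2)]
  have ht₀mem : t₀ ∈ Ico 0 T := ⟨ht₀.le, ht₀T⟩
  obtain ⟨α, hα₀, hα⟩ := hex t₀ (a t₀, deriv a t₀) (hlow t₀ ht₀mem) (hbd t₀ ht₀mem)
  have hαsol : SolvesScaleODE (fun t => (α t).1) (Ioo t₀ (t₀ + δ)) := by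
    refine solvesScaleODE_fst isOpen_Ioo (fun t ht => ?_) fun t ht =>
      (half_pos hm).trans_le (hα t (Ioo_subset_Icc_self ht)).2.1
    obtain ⟨hαt, h₁, h₂⟩ := hα t (Ioo_subset_Icc_self ht)
    exact truncScaleField_eq h₁ h₂ ▸ hαt.hasDerivAt (Icc_mem_nhds ht.1 ht.2)
  have heq : EqOn a (fun t => (α t).1) (Ioo t₀ T) := fun t ht =>
    congrArg Prod.fst (h.eqOn_of_integralCurve (fun u hu => (half_le_self hm.le).trans (hlow u hu))
      (fun u hu => (hbd u hu).trans (by linarith)) (half_pos hm) ht₀ hTδ.le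
      (fun u hu => (hα u hu).1) hα₀ ⟨ht.1.le, ht.2⟩)
  exact ⟨_, t₀ + δ, hTδ, fun t ht => if_pos ht.2, h.glue hαsol ht₀ ht₀T hTδ heq⟩

end SolvesScaleODE

/-- Case A: if `a'(0) ≥ √(8π/3)` then the right-maximal solution with
`a(0) = 1` exists on all of `[0,∞)` and `a' > 0` everywhere. -/
theorem caseA_global_expansion (a : ℝ → ℝ) (Ta : ℝ≥0∞)
    (hmax : IsMaxScaleSol a Ta)
    (hA : Real.sqrt (8 * π / 3) ≤ deriv a 0) :
    Ta = ⊤ ∧ ∀ t : ℝ, 0 ≤ t → 0 < deriv a t := by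
  obtain ⟨hTa, ha₀, hsol, hmaximal⟩ := hmax
  have h₀ : 0 < deriv a 0 := (Real.sqrt_pos.mpr (by positivity)).trans_le hA
  have hE : 0 ≤ scaleEnergy a 0 := by
    rw [scaleEnergy, ha₀, div_one]
    linarith [(Real.sqrt_le_iff.mp hA).2]
  have hbounds : ∀ T : ℝ, Ico 0 T ⊆ Dom Ta → ∀ t ∈ Ico 0 T,
      0 < deriv a t ∧ deriv a t ≤ deriv a 0 ∧ a 0 ≤ a t := fun T hT t ht =>
    have h := hsol.mono hT
    ⟨h.deriv_pos h₀ hE ht, h.antitoneOn_deriv ⟨le_rfl, ht.1.trans_lt ht.2⟩ ht ht.1,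
      h.monotoneOn h₀ hE ⟨le_rfl, ht.1.trans_lt ht.2⟩ ht ht.1⟩
  have hTop : Ta = ⊤ := by
    by_contra hne
    have hdom : Dom Ta = Ico 0 Ta.toReal := by rw [← dom_ofReal, ENNReal.ofReal_toReal hne]
    have hbd := hbounds _ hdom.ge
    obtain ⟨b, T', hT', hba, hb⟩ := (hdom ▸ hsol).exists_extension
      (ENNReal.toReal_pos hTa.ne' hne) (ha₀ ▸ one_pos) (fun t ht => (hbd t ht).2.2)
      (fun t ht => abs_le.mpr ⟨by linarith [(hbd t ht).1], (hbd t ht).2.1⟩)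
    exact hmaximal b (ENNReal.ofReal T') ((ENNReal.lt_ofReal_iff_toReal_lt hne).mpr hT')
      (hdom ▸ hba) (dom_ofReal T' ▸ hb)
  refine ⟨hTop, fun t ht => (hbounds (t + 1) ?_ t ⟨ht, by linarith⟩).1⟩
  rw [hTop, dom_top]
  exact Ico_subset_Ici_self
end
end

section
/- Let a : [0,T_a) → (0,∞) be the right-maximal solution of the ordinary differential equation a''(t) + (4π/3) a(t)⁻² = 0 with a(0) = 1, and assume a'(0) < √(8π/3) (Case B). Then T_a < ∞, lim_{t → T_a} a(t) = 0, and there exists t_a ∈ [0,T_a) such that a'(t) > 0 for t ∈ [0,t_a) and a'(t) < 0 for t ∈ (t_a, T_a). -/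
open MeasureTheory Real Set Filter
open scoped ENNReal RealInnerProductSpace

noncomputable section
open Metric

local notation "kk" => 4 * π / 3


lemma hasDerivAt_fst {α : ℝ → ℝ × ℝ} {p : ℝ × ℝ} {t : ℝ} (h : HasDerivAt α p t) :
    HasDerivAt (fun s => (α s).1) p.1 t := by
  have h1 := ((ContinuousLinearMap.fst ℝ ℝ ℝ).hasFDerivAt).comp t h.hasFDerivAt
  have h2 := h1.hasDerivAt
  exact (by simpa using h2 : HasDerivAt (Prod.fst ∘ α) p.1 t)

lemma hasDerivAt_snd {α : ℝ → ℝ × ℝ} {p : ℝ × ℝ} {t : ℝ} (h : HasDerivAt α p t) :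
    HasDerivAt (fun s => (α s).2) p.2 t := by
  have h1 := ((ContinuousLinearMap.snd ℝ ℝ ℝ).hasFDerivAt).comp t h.hasFDerivAt
  have h2 := h1.hasDerivAt
  exact (by simpa using h2 : HasDerivAt (Prod.snd ∘ α) p.2 t)

/-- Smoothness and derivative identities for the first component of a flow of the
second-order ODE written as a system. -/
lemma flow_smooth {α : ℝ → ℝ × ℝ} {U : Set ℝ} (hU : IsOpen U)
    (hd : ∀ t ∈ U, HasDerivAt α ((α t).2, -(kk * ((α t).1 ^ 2)⁻¹)) t)
    (hpos : ∀ t ∈ U, 0 < (α t).1) :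
    ContDiffOn ℝ 2 (fun t => (α t).1) U ∧
    (∀ t ∈ U, deriv (deriv (fun s => (α s).1)) t = -(kk * ((α t).1 ^ 2)⁻¹)) := by
  have hd1 : ∀ t ∈ U, HasDerivAt (fun s => (α s).1) ((α t).2) t :=
    fun t ht => hasDerivAt_fst (hd t ht)
  have hd2 : ∀ t ∈ U, HasDerivAt (fun s => (α s).2) (-(kk * ((α t).1 ^ 2)⁻¹)) t :=
    fun t ht => hasDerivAt_snd (hd t ht)
  have hc1 : ContinuousOn (fun s => (α s).1) U :=
    fun t ht => (hd1 t ht).differentiableAt.continuousAt.continuousWithinAt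
  have hc2 : ContinuousOn (fun s => (α s).2) U :=
    fun t ht => (hd2 t ht).differentiableAt.continuousAt.continuousWithinAt
  have hder1 : ∀ t ∈ U, deriv (fun s => (α s).1) t = (α t).2 :=
    fun t ht => (hd1 t ht).deriv
  have hder2 : ∀ t ∈ U, deriv (fun s => (α s).2) t = -(kk * ((α t).1 ^ 2)⁻¹) :=
    fun t ht => (hd2 t ht).deriv
  have hcd : ContinuousOn (fun t => -(kk * ((α t).1 ^ 2)⁻¹)) U := by
    exact (continuousOn_const.mul ((hc1.pow 2).inv₀
      (fun t ht => pow_ne_zero 2 (hpos t ht).ne'))).neg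
  have hC1snd : ContDiffOn ℝ 1 (fun s => (α s).2) U := by
    rw [show (1 : WithTop ℕ∞) = 0 + 1 by norm_num, contDiffOn_succ_iff_deriv_of_isOpen hU]
    refine ⟨fun t ht => (hd2 t ht).differentiableAt.differentiableWithinAt, by simp, ?_⟩
    rw [contDiffOn_zero]
    exact ContinuousOn.congr hcd (fun t ht => hder2 t ht)
  have hC2 : ContDiffOn ℝ 2 (fun t => (α t).1) U := by
    rw [show (2 : WithTop ℕ∞) = 1 + 1 by norm_num, contDiffOn_succ_iff_deriv_of_isOpen hU]
    refine ⟨fun t ht => (hd1 t ht).differentiableAt.differentiableWithinAt, by simp, ?_⟩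
    exact ContDiffOn.congr hC1snd (fun t ht => hder1 t ht)
  refine ⟨hC2, fun t ht => ?_⟩
  have hev : deriv (fun s => (α s).1) =ᶠ[nhds t] (fun s => (α s).2) :=
    eventually_of_mem (hU.mem_nhds ht) (fun x hx => hder1 x hx)
  rw [hev.deriv_eq, hder2 t ht]

section core
variable {a : ℝ → ℝ} {T : ℝ}


lemma ha_deriv (hC2 : ContDiffOn ℝ 2 a (Ico 0 T)) :
    ∀ t ∈ Ioo 0 T, HasDerivAt a (deriv a t) t := by
  intro t ht
  have h1 : DifferentiableOn ℝ a (Ico 0 T) := hC2.differentiableOn two_ne_zero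
  exact ((h1 t ⟨ht.1.le, ht.2⟩).differentiableAt (Ico_mem_nhds ht.1 ht.2)).hasDerivAt

lemma hv_deriv' (hpos : ∀ t ∈ Ico 0 T, 0 < a t)
    (hode : ∀ t ∈ Ico 0 T, deriv (deriv a) t + kk * (a t ^ 2)⁻¹ = 0) :
    ∀ t ∈ Ico 0 T, HasDerivAt (deriv a) (-(kk * (a t ^ 2)⁻¹)) t := by
  intro t ht
  have hval : deriv (deriv a) t = -(kk * (a t ^ 2)⁻¹) := by linarith [hode t ht]
  have hne : deriv (deriv a) t ≠ 0 := by
    rw [hval]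
    have h1 := hpos t ht
    have : 0 < kk * (a t ^ 2)⁻¹ := by positivity
    linarith
  have hd : DifferentiableAt ℝ (deriv a) t := by
    by_contra h
    exact hne (deriv_zero_of_not_differentiableAt h)
  have := hd.hasDerivAt
  rwa [hval] at this

lemma hv_anti (hpos : ∀ t ∈ Ico 0 T, 0 < a t)
    (hode : ∀ t ∈ Ico 0 T, deriv (deriv a) t + kk * (a t ^ 2)⁻¹ = 0) :
    StrictAntiOn (deriv a) (Ico 0 T) := by
  apply strictAntiOn_of_deriv_neg (convex_Ico 0 T)
  · exact fun t ht =>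
      ((hv_deriv' hpos hode t ht).differentiableAt).continuousAt.continuousWithinAt
  · intro t ht
    rw [interior_Ico] at ht
    rw [(hv_deriv' hpos hode t ⟨ht.1.le, ht.2⟩).deriv]
    have h1 := hpos t ⟨ht.1.le, ht.2⟩
    have : 0 < kk * (a t ^ 2)⁻¹ := by positivity
    linarith

lemma a_linear_decay (hpos : ∀ t ∈ Ico 0 T, 0 < a t) (hC2 : ContDiffOn ℝ 2 a (Ico 0 T))
    (hode : ∀ t ∈ Ico 0 T, deriv (deriv a) t + kk * (a t ^ 2)⁻¹ = 0)
    {t1 : ℝ} (ht1 : t1 ∈ Ico 0 T) :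
    ∀ t ∈ Ico 0 T, t1 ≤ t → a t ≤ a t1 + deriv a t1 * (t - t1) := by
  intro t ht htt
  have hanti : AntitoneOn (fun x => a x - deriv a t1 * x) (Ico t1 T) := by
    apply antitoneOn_of_deriv_nonpos (convex_Ico t1 T)
    · exact ((hC2.continuousOn).mono (Ico_subset_Ico_left ht1.1)).sub
        (continuousOn_const.mul continuousOn_id)
    · intro x hx
      rw [interior_Ico] at hx
      have hx' : x ∈ Ioo 0 T := ⟨lt_of_le_of_lt ht1.1 hx.1, hx.2⟩
      exact (((ha_deriv hC2 x hx').sub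
        ((hasDerivAt_id x).const_mul (deriv a t1))).differentiableAt).differentiableWithinAt
    · intro x hx
      rw [interior_Ico] at hx
      have hx' : x ∈ Ioo 0 T := ⟨lt_of_le_of_lt ht1.1 hx.1, hx.2⟩
      have hd : HasDerivAt (fun x => a x - deriv a t1 * x)
          (deriv a x - deriv a t1 * 1) x :=
        (ha_deriv hC2 x hx').sub ((hasDerivAt_id x).const_mul (deriv a t1))
      rw [hd.deriv]
      have := hv_anti hpos hode ht1 ⟨ht1.1.trans hx.1.le, hx.2⟩ hx.1
      linarith
  have := hanti (left_mem_Ico.mpr (lt_of_le_of_lt htt ht.2)) ⟨htt, ht.2⟩ htt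
  simp only at this
  linarith

lemma v_linear_decay (hpos : ∀ t ∈ Ico 0 T, 0 < a t) (hC2 : ContDiffOn ℝ 2 a (Ico 0 T))
    (hode : ∀ t ∈ Ico 0 T, deriv (deriv a) t + kk * (a t ^ 2)⁻¹ = 0)
    {M : ℝ} (hM : 0 < M) (hb : ∀ t ∈ Ico 0 T, a t ≤ M) :
    ∀ t ∈ Ico 0 T, deriv a t ≤ deriv a 0 - kk / M ^ 2 * t := by
  intro t ht
  have hanti : AntitoneOn (fun x => deriv a x + kk / M ^ 2 * x) (Ico 0 T) := by
    apply antitoneOn_of_deriv_nonpos (convex_Ico 0 T)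
    · have : ContinuousOn (deriv a) (Ico 0 T) := fun x hx =>
        ((hv_deriv' hpos hode x hx).differentiableAt).continuousAt.continuousWithinAt
      exact this.add (continuousOn_const.mul continuousOn_id)
    · intro x hx
      rw [interior_Ico] at hx
      have hx' : x ∈ Ico 0 T := ⟨hx.1.le, hx.2⟩
      exact (((hv_deriv' hpos hode x hx').add
        ((hasDerivAt_id x).const_mul (kk / M ^ 2))).differentiableAt).differentiableWithinAt
    · intro x hx
      rw [interior_Ico] at hx
      have hx' : x ∈ Ico 0 T := ⟨hx.1.le, hx.2⟩
      have hd : HasDerivAt (fun x => deriv a x + kk / M ^ 2 * x)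
          (-(kk * (a x ^ 2)⁻¹) + kk / M ^ 2 * 1) x :=
        (hv_deriv' hpos hode x hx').add ((hasDerivAt_id x).const_mul (kk / M ^ 2))
      rw [hd.deriv]
      have hax := hpos x hx'
      have haxM := hb x hx'
      have hsq : a x ^ 2 ≤ M ^ 2 := by nlinarith
      have h1 : (M ^ 2)⁻¹ ≤ (a x ^ 2)⁻¹ := by
        apply inv_anti₀ (by positivity) hsq
      have hkk : (0:ℝ) < kk := by positivity
      have : kk * (M ^ 2)⁻¹ ≤ kk * (a x ^ 2)⁻¹ := by
        exact mul_le_mul_of_nonneg_left h1 hkk.le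
      have hdiv : kk / M ^ 2 = kk * (M ^ 2)⁻¹ := by ring
      linarith
  have h0 : (0:ℝ) ∈ Ico 0 T := ⟨le_rfl, lt_of_le_of_lt ht.1 ht.2⟩
  have := hanti h0 ht ht.1
  simp only at this
  linarith

lemma ha_deriv0 (hT : 0 < T) (hpos : ∀ t ∈ Ico 0 T, 0 < a t)
    (hC2 : ContDiffOn ℝ 2 a (Ico 0 T))
    (hode : ∀ t ∈ Ico 0 T, deriv (deriv a) t + kk * (a t ^ 2)⁻¹ = 0) :
    HasDerivWithinAt a (deriv a 0) (Ici 0) 0 := by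
  apply hasDerivWithinAt_Ici_of_tendsto_deriv (s := Ioo 0 T)
  · exact fun t ht => ((ha_deriv hC2 t ht).differentiableAt).differentiableWithinAt
  · exact (hC2.continuousOn 0 ⟨le_rfl, hT⟩).mono Ioo_subset_Ico_self
  · exact Ioo_mem_nhdsGT_of_mem ⟨le_rfl, hT⟩
  · have hc : ContinuousAt (deriv a) 0 :=
      ((hv_deriv' hpos hode 0 ⟨le_rfl, hT⟩).differentiableAt).continuousAt
    exact hc.continuousWithinAt.tendsto

/-- Energy conservation. -/
lemma energy (hT : 0 < T) (hpos : ∀ t ∈ Ico 0 T, 0 < a t)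
    (hC2 : ContDiffOn ℝ 2 a (Ico 0 T))
    (hode : ∀ t ∈ Ico 0 T, deriv (deriv a) t + kk * (a t ^ 2)⁻¹ = 0)
    (ha0 : a 0 = 1) :
    ∀ t ∈ Ico 0 T, (deriv a t) ^ 2 - 2 * kk * (a t)⁻¹ = (deriv a 0) ^ 2 - 2 * kk := by
  intro t ht
  set E : ℝ → ℝ := fun x => (deriv a x) ^ 2 - 2 * kk * (a x)⁻¹ with hE
  have key : E t = E 0 := by
    rcases eq_or_lt_of_le ht.1 with h0 | h0
    · rw [← h0]
    have hsub : Icc 0 t ⊆ Ico 0 T := fun x hx => ⟨hx.1, lt_of_le_of_lt hx.2 ht.2⟩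
    have hsub' : Ico 0 t ⊆ Ico 0 T := fun x hx => ⟨hx.1, hx.2.trans ht.2⟩
    have hAder : ∀ x ∈ Ico 0 t, HasDerivWithinAt a (deriv a x) (Ici x) x := by
      intro x hx
      rcases eq_or_lt_of_le hx.1 with hx0 | hx0
      · rw [← hx0]; exact ha_deriv0 hT hpos hC2 hode
      · exact (ha_deriv hC2 x ⟨hx0, (hsub' hx).2⟩).hasDerivWithinAt
    have hcont : ContinuousOn E (Icc 0 t) := by
      have hvc : ContinuousOn (deriv a) (Icc 0 t) := fun x hx =>
        ((hv_deriv' hpos hode x (hsub hx)).differentiableAt).continuousAt.continuousWithinAt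
      have hac : ContinuousOn a (Icc 0 t) := (hC2.continuousOn).mono hsub
      exact (hvc.pow 2).sub (continuousOn_const.mul
        (hac.inv₀ (fun x hx => (hpos x (hsub hx)).ne')))
    have hder : ∀ x ∈ Ico 0 t, HasDerivWithinAt E 0 (Ici x) x := by
      intro x hx
      have hax := hpos x (hsub' hx)
      have h1 : HasDerivWithinAt a (deriv a x) (Ici x) x := hAder x hx
      have h2 : HasDerivWithinAt (deriv a) (-(kk * (a x ^ 2)⁻¹)) (Ici x) x :=
        (hv_deriv' hpos hode x (hsub' hx)).hasDerivWithinAt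
      have h3 : HasDerivWithinAt (fun y => (deriv a y) ^ 2)
          (2 * (deriv a x) * (-(kk * (a x ^ 2)⁻¹))) (Ici x) x := by
        have := h2.pow 2
        refine this.congr_deriv ?_
        ring
      have h4 : HasDerivWithinAt (fun y => 2 * kk * (a y)⁻¹)
          (2 * kk * (-(deriv a x) / (a x) ^ 2)) (Ici x) x :=
        (h1.inv hax.ne').const_mul _
      have h5 := h3.sub h4
      refine h5.congr_deriv ?_
      field_simp
      ring
    have := constant_of_has_deriv_right_zero hcont hder t (right_mem_Icc.mpr h0.le)
    exact this
  have ha0' : (a 0)⁻¹ = 1 := by rw [ha0]; norm_num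
  have := key
  rw [hE] at this
  simp only [ha0'] at this
  linarith [this]



lemma no_global {a : ℝ → ℝ} (hpos : ∀ t ∈ Ici (0:ℝ), 0 < a t)
    (hC2 : ContDiffOn ℝ 2 a (Ici 0))
    (hode : ∀ t ∈ Ici (0:ℝ), deriv (deriv a) t + kk * (a t ^ 2)⁻¹ = 0)
    (ha0 : a 0 = 1) (hB : deriv a 0 < Real.sqrt (8 * π / 3)) : False := by
  have hsub : ∀ T : ℝ, Ico (0:ℝ) T ⊆ Ici 0 := fun T x hx => hx.1
  have hposT : ∀ T : ℝ, ∀ t ∈ Ico (0:ℝ) T, 0 < a t := fun T t ht => hpos t (hsub T ht)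
  have hC2T : ∀ T : ℝ, ContDiffOn ℝ 2 a (Ico 0 T) := fun T => hC2.mono (hsub T)
  have hodeT : ∀ T : ℝ, ∀ t ∈ Ico (0:ℝ) T, deriv (deriv a) t + kk * (a t ^ 2)⁻¹ = 0 :=
    fun T t ht => hode t (hsub T ht)
  by_cases hneg : ∃ t1, 0 ≤ t1 ∧ deriv a t1 < 0
  · obtain ⟨t1, ht1, hv1⟩ := hneg
    have hat1 := hpos t1 ht1
    set q : ℝ := a t1 / (-deriv a t1) with hq
    have hq0 : 0 < q := div_pos hat1 (by linarith)
    set t2 : ℝ := t1 + q + 1 with ht2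
    set T : ℝ := t2 + 1 with hT
    have hkey := a_linear_decay (hposT T) (hC2T T) (hodeT T)
      (t1 := t1) ⟨ht1, by rw [hT, ht2]; linarith⟩ t2
      ⟨by linarith, by rw [hT]; linarith⟩ (by rw [ht2]; linarith)
    have hvq : deriv a t1 * q = -a t1 := by
      rw [hq, ← mul_div_assoc, div_eq_iff (by linarith : -deriv a t1 ≠ 0)]
      ring
    have h1 : a t2 ≤ deriv a t1 := by
      have : t2 - t1 = q + 1 := by rw [ht2]; ring
      rw [this] at hkey
      nlinarith
    have := hpos t2 (by rw [mem_Ici, ht2]; linarith)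
    linarith
  · push_neg at hneg
    have hv0 : 0 ≤ deriv a 0 := hneg 0 le_rfl
    have hv0sq : (deriv a 0) ^ 2 < 8 * π / 3 := (Real.lt_sqrt hv0).mp hB
    set c : ℝ := 2 * kk - (deriv a 0) ^ 2 with hc
    have hc0 : 0 < c := by rw [hc]; ring_nf; ring_nf at hv0sq; linarith
    set M : ℝ := 2 * kk / c with hM
    have hkk : (0:ℝ) < kk := by positivity
    have hM0 : 0 < M := by positivity
    have hbound : ∀ T : ℝ, ∀ t ∈ Ico (0:ℝ) T, a t ≤ M := by
      intro T t ht
      have hen := energy (lt_of_le_of_lt ht.1 ht.2) (hposT T) (hC2T T) (hodeT T) ha0 t ht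
      have hat := hposT T t ht
      have h2 : c ≤ 2 * kk * (a t)⁻¹ := by nlinarith [sq_nonneg (deriv a t)]
      have h3 : c * a t ≤ 2 * kk := by
        have := mul_le_mul_of_nonneg_right h2 hat.le
        rw [mul_assoc, inv_mul_cancel₀ hat.ne', mul_one] at this
        linarith
      rw [hM]
      rw [le_div_iff₀ hc0]
      linarith
    set tt : ℝ := (deriv a 0 + 1) / (kk / M ^ 2) with htt
    have hcM : 0 < kk / M ^ 2 := by positivity
    have htt0 : 0 ≤ tt := div_nonneg (by linarith) hcM.le
    set T : ℝ := tt + 1 with hTdef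
    have hdecay := v_linear_decay (hposT T) (hC2T T) (hodeT T) hM0 (hbound T) tt
      ⟨htt0, by rw [hTdef]; linarith⟩
    have hmul : kk / M ^ 2 * tt = deriv a 0 + 1 := by
      rw [htt, mul_comm, div_mul_cancel₀ _ hcM.ne']
    have : deriv a tt ≤ -1 := by rw [hmul] at hdecay; linarith
    linarith [hneg tt htt0]

end core

lemma extension {a : ℝ → ℝ} {T : ℝ} (hT : 0 < T)
    (hpos : ∀ t ∈ Ico 0 T, 0 < a t) (hC2 : ContDiffOn ℝ 2 a (Ico 0 T))
    (hode : ∀ t ∈ Ico 0 T, deriv (deriv a) t + kk * (a t ^ 2)⁻¹ = 0)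
    {A V : ℝ} (hA : 0 < A)
    (hta : Tendsto a (nhdsWithin T (Iio T)) (nhds A))
    (htv : Tendsto (deriv a) (nhdsWithin T (Iio T)) (nhds V)) :
    ∃ (b : ℝ → ℝ) (T' : ℝ), T < T' ∧ Set.EqOn b a (Ico 0 T) ∧
      (∀ t ∈ Ico 0 T', 0 < b t) ∧ ContDiffOn ℝ 2 b (Ico 0 T') ∧
      (∀ t ∈ Ico 0 T', deriv (deriv b) t + kk * (b t ^ 2)⁻¹ = 0) := by
  classical
  have hodeval : ∀ x ∈ Ico 0 T, deriv (deriv a) x = -(kk * (a x ^ 2)⁻¹) :=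
    fun x hx => by linarith [hode x hx]
  set F : ℝ × ℝ → ℝ × ℝ := fun x => (x.2, -(kk * (x.1 ^ 2)⁻¹)) with hF
  have hFA : ContDiffAt ℝ 1 F (A, V) := by
    apply ContDiffAt.prodMk contDiffAt_snd
    exact (contDiffAt_const.mul ((contDiffAt_fst.pow 2).inv
      (by simpa using pow_ne_zero 2 hA.ne'))).neg
  obtain ⟨K, U0, hU0, hlipU⟩ := hFA.exists_lipschitzOnWith
  obtain ⟨r, hr0, hballr⟩ := Metric.mem_nhds_iff.mp hU0
  set ρ : ℝ := min (r / 2) (A / 2) with hρ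
  have hρ0 : 0 < ρ := lt_min (by linarith) (by linarith)
  have hρA : ρ ≤ A / 2 := min_le_right _ _
  have hballsub : closedBall (A, V) ρ ⊆ U0 :=
    (closedBall_subset_ball (lt_of_le_of_lt (min_le_left _ _) (by linarith))).trans hballr
  have hlip : LipschitzOnWith K F (closedBall (A, V) ρ) := hlipU.mono hballsub
  have hfst : ∀ x ∈ closedBall (A, V) ρ, A / 2 ≤ x.1 := by
    intro x hx
    have h1 : dist x.1 A ≤ dist x (A, V) := by
      rw [Prod.dist_eq]; exact le_max_left _ _
    have h2 : |x.1 - A| ≤ ρ := by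
      rw [← Real.dist_eq]; exact h1.trans (mem_closedBall.mp hx)
    have h3 := abs_le.mp h2
    linarith [h3.1]
  obtain ⟨α, hα0, ε, hε0, hαd⟩ := hFA.exists_forall_mem_closedBall_exists_eq_forall_mem_Ioo_hasDerivAt₀ T
  have hαT : ContinuousAt α T :=
    (hαd T ⟨by linarith, by linarith⟩).differentiableAt.continuousAt
  have hpre : α ⁻¹' ball (A, V) ρ ∈ nhds T :=
    hαT.preimage_mem_nhds (by rw [hα0]; exact ball_mem_nhds _ hρ0)
  obtain ⟨ε₂', hε₂'0, hballsub2⟩ := Metric.mem_nhds_iff.mp hpre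
  set ε₂ : ℝ := min (ε₂' / 2) (ε / 2) with hε₂
  have hε₂0 : 0 < ε₂ := lt_min (by linarith) (by linarith)
  have hε₂ε : ε₂ ≤ ε / 2 := min_le_right _ _
  have hε₂' : ε₂ ≤ ε₂' / 2 := min_le_left _ _
  have hαball : ∀ t : ℝ, |t - T| ≤ ε₂ → α t ∈ ball (A, V) ρ := by
    intro t htt
    apply hballsub2
    rw [mem_ball, Real.dist_eq]
    linarith
  have hγ : Tendsto (fun t => (a t, deriv a t)) (nhdsWithin T (Iio T)) (nhds (A, V)) :=
    hta.prodMk_nhds htv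
  have hγpre : (fun t => (a t, deriv a t)) ⁻¹' closedBall (A, V) ρ ∈ nhdsWithin T (Iio T) :=
    hγ (closedBall_mem_nhds _ hρ0)
  obtain ⟨c', hc'T, hc'sub⟩ := mem_nhdsLT_iff_exists_Ioo_subset.mp hγpre
  set c : ℝ := max c' (max (T - ε₂ / 2) (T / 2)) with hc
  have hcT : c < T := by
    apply max_lt hc'T
    exact max_lt (by linarith) (by linarith)
  have hc0 : 0 < c := lt_of_lt_of_le (by linarith : (0:ℝ) < T / 2)
    ((le_max_right _ _).trans (le_max_right _ _))
  have hcε₂ : T - ε₂ / 2 ≤ c := (le_max_left _ _).trans (le_max_right _ _)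
  have hγball : ∀ t ∈ Ioo c T, (a t, deriv a t) ∈ closedBall (A, V) ρ := by
    intro t ht
    exact hc'sub ⟨lt_of_le_of_lt (le_max_left _ _) ht.1, ht.2⟩
  have hIooc : Ioo c T ⊆ Ioo 0 T := fun x hx => ⟨hc0.trans hx.1, hx.2⟩
  set Aa : ℝ → ℝ := fun t => if t < T then a t else A with hAadef
  set Vv : ℝ → ℝ := fun t => if t < T then deriv a t else V with hVvdef
  set Γ : ℝ → ℝ × ℝ := fun t => (Aa t, Vv t) with hΓdef
  have hAaT : Aa T = A := if_neg (lt_irrefl T)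
  have hVvT : Vv T = V := if_neg (lt_irrefl T)
  have hΓT : Γ T = (A, V) := by rw [hΓdef]; simp only [hAaT, hVvT]
  have hAev : ∀ t ∈ Iio T, Aa =ᶠ[nhds t] a := by
    intro t ht
    filter_upwards [isOpen_Iio.mem_nhds ht] with x hx
    simp only [hAadef, if_pos (mem_Iio.mp hx)]
  have hVev : ∀ t ∈ Iio T, Vv =ᶠ[nhds t] deriv a := by
    intro t ht
    filter_upwards [isOpen_Iio.mem_nhds ht] with x hx
    simp only [hVvdef, if_pos (mem_Iio.mp hx)]
  have hΓev : ∀ t ∈ Iio T, Γ =ᶠ[nhds t] (fun s => (a s, deriv a s)) := by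
    intro t ht
    filter_upwards [(hAev t ht).and (hVev t ht)] with x hx
    rw [hΓdef]; simp only [hx.1, hx.2]
  have hΓd : ∀ t ∈ Ioo 0 T, HasDerivAt Γ (F (Γ t)) t := by
    intro t ht
    have h1 : HasDerivAt (fun s => (a s, deriv a s))
        (deriv a t, -(kk * (a t ^ 2)⁻¹)) t :=
      (ha_deriv hC2 t ht).prodMk (hv_deriv' hpos hode t ⟨ht.1.le, ht.2⟩)
    have h2 := h1.congr_of_eventuallyEq (hΓev t ht.2)
    have h3 : F (Γ t) = (deriv a t, -(kk * (a t ^ 2)⁻¹)) := by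
      rw [hF, hΓdef]
      simp only [hAadef, hVvdef, if_pos ht.2]
    rw [h3]
    exact h2
  have hIooT : Ioo c T ∈ nhdsWithin T (Iio T) := Ioo_mem_nhdsLT hcT
  have hAaev : ∀ x ∈ Iio T, deriv Aa x = deriv a x :=
    fun x hx => (hAev x hx).deriv_eq
  have hVvev : ∀ x ∈ Iio T, deriv Vv x = deriv (deriv a) x :=
    fun x hx => (hVev x hx).deriv_eq
  have hdAaT : HasDerivWithinAt Aa V (Iic T) T := by
    apply hasDerivWithinAt_Iic_of_tendsto_deriv (s := Ioo c T)
    · intro x hx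
      exact ((ha_deriv hC2 x (hIooc hx)).congr_of_eventuallyEq
        (hAev x hx.2)).differentiableAt.differentiableWithinAt
    · have h1 : Tendsto a (nhdsWithin T (Ioo c T)) (nhds A) :=
        hta.mono_left (nhdsWithin_mono T Ioo_subset_Iio_self)
      have h2 : Tendsto Aa (nhdsWithin T (Ioo c T)) (nhds A) := by
        apply h1.congr'
        exact eventually_of_mem self_mem_nhdsWithin (fun x hx => (if_pos hx.2).symm)
      rw [ContinuousWithinAt, hAaT]
      exact h2
    · exact hIooT
    · apply htv.congr'
      exact eventually_of_mem self_mem_nhdsWithin (fun x hx => (hAaev x hx).symm)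
  have hdVvT : HasDerivWithinAt Vv (-(kk * (A ^ 2)⁻¹)) (Iic T) T := by
    apply hasDerivWithinAt_Iic_of_tendsto_deriv (s := Ioo c T)
    · intro x hx
      exact ((hv_deriv' hpos hode x ⟨(hIooc hx).1.le, hx.2⟩).congr_of_eventuallyEq
        (hVev x hx.2)).differentiableAt.differentiableWithinAt
    · have h1 : Tendsto (deriv a) (nhdsWithin T (Ioo c T)) (nhds V) :=
        htv.mono_left (nhdsWithin_mono T Ioo_subset_Iio_self)
      have h2 : Tendsto Vv (nhdsWithin T (Ioo c T)) (nhds V) := by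
        apply h1.congr'
        exact eventually_of_mem self_mem_nhdsWithin (fun x hx => (if_pos hx.2).symm)
      rw [ContinuousWithinAt, hVvT]
      exact h2
    · exact hIooT
    · have htarget : Tendsto (fun x => -(kk * (a x ^ 2)⁻¹)) (nhdsWithin T (Iio T))
          (nhds (-(kk * (A ^ 2)⁻¹))) := by
        apply Tendsto.neg
        exact ((hta.pow 2).inv₀ (pow_ne_zero 2 hA.ne')).const_mul _
      apply htarget.congr'
      apply eventually_of_mem hIooT
      intro x hx
      show -(kk * (a x ^ 2)⁻¹) = deriv Vv x
      rw [hVvev x hx.2, hodeval x ⟨(hIooc hx).1.le, hx.2⟩]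
  have hdΓT : HasDerivWithinAt Γ (V, -(kk * (A ^ 2)⁻¹)) (Iic T) T := hdAaT.prodMk hdVvT
  have hΓcont : ContinuousOn Γ (Icc c T) := by
    intro x hx
    rcases eq_or_lt_of_le hx.2 with hxT | hxT
    · subst hxT
      apply ContinuousWithinAt.mono _ Icc_subset_Iic_self
      rw [ContinuousWithinAt, hΓT, show Iic x = Iio x ∪ {x} from (Iio_union_right).symm,
        nhdsWithin_union, tendsto_sup]
      constructor
      · apply hγ.congr'
        exact eventually_of_mem self_mem_nhdsWithin
          (fun y hy => ((hΓev y hy).self_of_nhds).symm)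
      · rw [nhdsWithin_singleton]
        have := tendsto_pure_nhds Γ x
        rwa [hΓT] at this
    · have hx0 : x ∈ Ioo 0 T := ⟨hc0.trans_le hx.1, hxT⟩
      have hca : ContinuousAt (fun s => (a s, deriv a s)) x :=
        ((ha_deriv hC2 x hx0).differentiableAt.continuousAt).prodMk
          ((hv_deriv' hpos hode x ⟨hx0.1.le, hxT⟩).differentiableAt.continuousAt)
      exact (hca.congr (hΓev x hxT).symm).continuousWithinAt
  have hmemIoo : ∀ t ∈ Icc c T, t ∈ Ioo (T - ε) (T + ε) := by
    intro t ht
    constructor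
    · linarith [ht.1, ht.2]
    · linarith [ht.1, ht.2]
  have hαcont : ContinuousOn α (Icc c T) :=
    fun x hx => (hαd x (hmemIoo x hx)).differentiableAt.continuousAt.continuousWithinAt
  have hEq : Set.EqOn Γ α (Icc c T) := by
    apply ODE_solution_unique_of_mem_Icc_left (v := fun _ : ℝ => F)
      (s := fun _ => closedBall (A, V) ρ) (fun _ _ => hlip) hΓcont ?_ ?_ hαcont ?_ ?_ ?_
    · intro t ht
      rcases eq_or_lt_of_le ht.2 with htT | htT
      · subst htT
        show HasDerivWithinAt Γ (F (Γ t)) (Iic t) t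
        have hFval : F (Γ t) = (V, -(kk * (A ^ 2)⁻¹)) := by
          rw [hΓT, hF]
        rw [hFval]
        exact hdΓT
      · exact (hΓd t ⟨hc0.trans ht.1, htT⟩).hasDerivWithinAt
    · intro t ht
      rcases eq_or_lt_of_le ht.2 with htT | htT
      · subst htT
        rw [hΓT]
        exact mem_closedBall_self hρ0.le
      · have : Γ t = (a t, deriv a t) := (hΓev t htT).self_of_nhds
        rw [this]
        exact hγball t ⟨ht.1, htT⟩
    · intro t ht
      exact (hαd t (hmemIoo t ⟨ht.1.le, ht.2⟩)).hasDerivWithinAt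
    · intro t ht
      apply ball_subset_closedBall
      apply hαball
      rw [abs_le]
      constructor
      · linarith [ht.1, ht.2]
      · linarith [ht.1, ht.2]
    · rw [hΓT, hα0]
  set U : Set ℝ := Ioo c (T + ε₂) with hUdef
  have hUopen : IsOpen U := isOpen_Ioo
  have hUsub : U ⊆ Ioo (T - ε) (T + ε) := by
    intro x hx
    constructor
    · linarith [hx.1, hx.2]
    · linarith [hx.1, hx.2]
  have hαU : ∀ t ∈ U, α t ∈ ball (A, V) ρ := by
    intro t ht
    apply hαball
    rw [abs_le]
    constructor
    · linarith [ht.1, ht.2]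
    · linarith [ht.1, ht.2]
  have hα1pos : ∀ t ∈ U, 0 < (α t).1 := fun t ht =>
    lt_of_lt_of_le (by linarith) (hfst _ (ball_subset_closedBall (hαU t ht)))
  have hαd' : ∀ t ∈ U, HasDerivAt α ((α t).2, -(kk * ((α t).1 ^ 2)⁻¹)) t :=
    fun t ht => hαd t (hUsub ht)
  obtain ⟨hαC2, hαode⟩ := flow_smooth hUopen hαd' hα1pos
  set b : ℝ → ℝ := fun t => if t < T then a t else (α t).1 with hbdef
  set T' : ℝ := T + ε₂ / 2 with hT'def
  have hbeqa : ∀ x ∈ Iio T, b x = a x := fun x hx => if_pos hx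
  have hbeqα : ∀ x ∈ U, b x = (α x).1 := by
    intro x hx
    by_cases hxT : x < T
    · rw [hbdef]
      simp only [if_pos hxT]
      have h1 := hEq ⟨hx.1.le, hxT.le⟩
      have h2 : Γ x = (a x, deriv a x) := (hΓev x hxT).self_of_nhds
      rw [h2] at h1
      exact congrArg Prod.fst h1
    · rw [hbdef]; simp only [if_neg hxT]
  have hbev_a : ∀ t ∈ Iio T, b =ᶠ[nhds t] a := by
    intro t ht
    filter_upwards [isOpen_Iio.mem_nhds ht] with x hx
    exact hbeqa x hx
  have hbev_α : ∀ t ∈ U, b =ᶠ[nhds t] (fun s => (α s).1) := by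
    intro t ht
    filter_upwards [hUopen.mem_nhds ht] with x hx
    exact hbeqα x hx
  have hTU : ∀ t, ¬ t < T → t < T' → t ∈ U := by
    intro t h1 h2
    rw [hUdef]
    constructor
    · linarith [not_lt.mp h1, hcT]
    · exact h2.trans (by rw [hT'def]; linarith)
  refine ⟨b, T', by rw [hT'def]; linarith, fun t ht => hbeqa t ht.2, ?_, ?_, ?_⟩
  · intro t ht
    by_cases htT : t < T
    · rw [hbeqa t htT]
      exact hpos t ⟨ht.1, htT⟩
    · rw [hbeqα t (hTU t htT ht.2)]
      exact hα1pos t (hTU t htT ht.2)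
  · intro t ht
    by_cases htT : t < T
    · have h1 : ContDiffWithinAt ℝ 2 a (Ico 0 T') t := by
        apply (hC2 t ⟨ht.1, htT⟩).mono_of_mem_nhdsWithin
        apply mem_nhdsWithin.mpr
        exact ⟨Iio T, isOpen_Iio, htT, fun x hx => ⟨hx.2.1, hx.1⟩⟩
      exact h1.congr_of_eventuallyEq ((hbev_a t htT).filter_mono nhdsWithin_le_nhds)
        (hbeqa t htT)
    · have htU : t ∈ U := hTU t htT ht.2
      have h1 : ContDiffWithinAt ℝ 2 (fun s => (α s).1) (Ico 0 T') t :=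
        ((hαC2 t htU).contDiffAt (hUopen.mem_nhds htU)).contDiffWithinAt
      exact h1.congr_of_eventuallyEq ((hbev_α t htU).filter_mono nhdsWithin_le_nhds)
        (hbeqα t htU)
  · intro t ht
    by_cases htT : t < T
    · have h1 : deriv b =ᶠ[nhds t] deriv a := by
        filter_upwards [isOpen_Iio.mem_nhds htT] with x hx
        exact (hbev_a x hx).deriv_eq
      rw [h1.deriv_eq, hbeqa t htT]
      exact hode t ⟨ht.1, htT⟩
    · have htU : t ∈ U := hTU t htT ht.2
      have h1 : deriv b =ᶠ[nhds t] deriv (fun s => (α s).1) := by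
        filter_upwards [hUopen.mem_nhds htU] with x hx
        exact (hbev_α x hx).deriv_eq
      rw [h1.deriv_eq, hbeqα t htU, hαode t htU]
      ring

/-- Case B: if `a'(0) < √(8π/3)` then the right-maximal solution with
`a(0) = 1` exists only for finite time, collapses (`a(t) → 0` as `t → Ta`), and there is a
time `t_a` before which `a' > 0` and after which `a' < 0`. -/
theorem caseB_collapse (a : ℝ → ℝ) (Ta : ℝ≥0∞)
    (hmax : IsMaxScaleSol a Ta)
    (hB : deriv a 0 < Real.sqrt (8 * π / 3)) :
    Ta ≠ ⊤ ∧
    Filter.Tendsto a (nhdsWithin Ta.toReal (Set.Iio Ta.toReal)) (nhds 0) ∧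
    ∃ ta : ℝ, 0 ≤ ta ∧ ta < Ta.toReal ∧
      (∀ t, 0 ≤ t → t < ta → 0 < deriv a t) ∧
      (∀ t, ta < t → t < Ta.toReal → deriv a t < 0) := by
  classical
  obtain ⟨hTa0, ha0, ⟨hpos, hC2, hode⟩, hmaxi⟩ := hmax
  -- Finite maximal time
  have hTtop : Ta ≠ ⊤ := by
    intro h
    subst h
    have hdomtop : Dom ⊤ = Ici (0:ℝ) := by
      ext t
      simp [Dom, ENNReal.ofReal_lt_top]
    rw [hdomtop] at hpos hC2 hode
    exact no_global hpos hC2 hode ha0 hB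
  set T : ℝ := Ta.toReal with hTdef
  have hT0 : 0 < T := ENNReal.toReal_pos hTa0.ne' hTtop
  have hdom : Dom Ta = Ico 0 T := by
    ext t
    simp only [Dom, mem_setOf_eq, mem_Ico]
    exact and_congr_right (fun ht => ENNReal.ofReal_lt_iff_lt_toReal ht hTtop)
  rw [hdom] at hpos hC2 hode
  -- No extension is possible (maximality)
  have hcontra : ∀ (A V : ℝ), 0 < A → Tendsto a (nhdsWithin T (Iio T)) (nhds A) →
      Tendsto (deriv a) (nhdsWithin T (Iio T)) (nhds V) → False := by
    intro A V hA hta htv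
    obtain ⟨b, T', hTT', hEqOn, hbpos, hbC2, hbode⟩ := extension hT0 hpos hC2 hode hA hta htv
    apply hmaxi b (ENNReal.ofReal T')
    · rw [← ENNReal.ofReal_toReal hTtop, ← hTdef]
      exact (ENNReal.ofReal_lt_ofReal_iff (by linarith)).mpr hTT'
    · rw [hdom]
      exact hEqOn
    · have hd2 : Dom (ENNReal.ofReal T') = Ico 0 T' := by
        ext t
        simp only [Dom, mem_setOf_eq, mem_Ico]
        refine and_congr_right (fun ht => ?_)
        rw [ENNReal.ofReal_lt_ofReal_iff (by linarith)]
      rw [hd2]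
      exact ⟨hbpos, hbC2, hbode⟩
  -- the velocity must become negative before `T`
  have ht1 : ∃ t1 ∈ Ico (0:ℝ) T, deriv a t1 < 0 := by
    by_contra hcon
    push_neg at hcon
    have hmono : MonotoneOn a (Ico 0 T) := by
      apply monotoneOn_of_deriv_nonneg (convex_Ico 0 T) hC2.continuousOn
      · intro x hx
        rw [interior_Ico] at hx
        exact (ha_deriv hC2 x hx).differentiableAt.differentiableWithinAt
      · intro x hx
        rw [interior_Ico] at hx
        exact hcon x ⟨hx.1.le, hx.2⟩
    have hv0 : 0 ≤ deriv a 0 := hcon 0 ⟨le_rfl, hT0⟩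
    have hv0sq : (deriv a 0) ^ 2 < 8 * π / 3 := (Real.lt_sqrt hv0).mp hB
    set cE : ℝ := 2 * kk - (deriv a 0) ^ 2 with hcE
    have hcE0 : 0 < cE := by rw [hcE]; ring_nf; ring_nf at hv0sq; linarith
    set M : ℝ := 2 * kk / cE with hM
    have hkk : (0:ℝ) < kk := by positivity
    have hbnd : ∀ t ∈ Ico (0:ℝ) T, a t ≤ M := by
      intro t ht
      have hen := energy hT0 hpos hC2 hode ha0 t ht
      have hat := hpos t ht
      have h2 : cE ≤ 2 * kk * (a t)⁻¹ := by nlinarith [sq_nonneg (deriv a t)]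
      have h3 : cE * a t ≤ 2 * kk := by
        have := mul_le_mul_of_nonneg_right h2 hat.le
        rw [mul_assoc, inv_mul_cancel₀ hat.ne', mul_one] at this
        linarith
      rw [hM, le_div_iff₀ hcE0]
      linarith
    have hne : (Ioo (0:ℝ) T).Nonempty := nonempty_Ioo.mpr hT0
    have hbddA : BddAbove (a '' Ioo 0 T) := by
      refine ⟨M, ?_⟩
      rintro y ⟨x, hx, rfl⟩
      exact hbnd x ⟨hx.1.le, hx.2⟩
    have hlimA : Tendsto a (nhdsWithin T (Iio T)) (nhds (sSup (a '' Ioo 0 T))) :=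
      (hmono.mono Ioo_subset_Ico_self).tendsto_nhdsWithin_Ioo_left hne hbddA
    have hApos : 0 < sSup (a '' Ioo 0 T) := by
      have hmem : a (T / 2) ∈ a '' Ioo 0 T :=
        mem_image_of_mem a ⟨by linarith, by linarith⟩
      have := le_csSup hbddA hmem
      have := hpos (T / 2) ⟨by linarith, by linarith⟩
      linarith
    have hbddV : BddBelow (deriv a '' Ioo 0 T) := by
      refine ⟨0, ?_⟩
      rintro y ⟨x, hx, rfl⟩
      exact hcon x ⟨hx.1.le, hx.2⟩
    have hvanti : AntitoneOn (deriv a) (Ioo 0 T) :=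
      ((hv_anti hpos hode).antitoneOn).mono Ioo_subset_Ico_self
    have hlimV : Tendsto (deriv a) (nhdsWithin T (Iio T))
        (nhds (sInf (deriv a '' Ioo 0 T))) :=
      hvanti.tendsto_nhdsWithin_Ioo_left hne hbddV
    exact hcontra _ _ hApos hlimA hlimV
  obtain ⟨t1, ht1mem, hv1⟩ := ht1
  -- `a` is decreasing after `t1` with a limit `L ≥ 0`
  have hvneg : ∀ t ∈ Ioo t1 T, deriv a t < 0 := fun t ht =>
    lt_trans (hv_anti hpos hode ht1mem ⟨ht1mem.1.trans ht.1.le, ht.2⟩ ht.1) hv1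
  have hanti : AntitoneOn a (Ico t1 T) := by
    apply antitoneOn_of_deriv_nonpos (convex_Ico t1 T)
    · exact hC2.continuousOn.mono (Ico_subset_Ico_left ht1mem.1)
    · intro x hx
      rw [interior_Ico] at hx
      exact (ha_deriv hC2 x ⟨ht1mem.1.trans_lt hx.1, hx.2⟩).differentiableAt.differentiableWithinAt
    · intro x hx
      rw [interior_Ico] at hx
      have hd : HasDerivAt a (deriv a x) x :=
        ha_deriv hC2 x ⟨ht1mem.1.trans_lt hx.1, hx.2⟩
      exact (hvneg x hx).le
  have hne1 : (Ioo t1 T).Nonempty := nonempty_Ioo.mpr ht1mem.2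
  have hmemT : ∀ x ∈ Ioo t1 T, x ∈ Ico (0:ℝ) T :=
    fun x hx => ⟨ht1mem.1.trans hx.1.le, hx.2⟩
  have hbddL : BddBelow (a '' Ioo t1 T) := by
    refine ⟨0, ?_⟩
    rintro y ⟨x, hx, rfl⟩
    exact (hpos x (hmemT x hx)).le
  set L : ℝ := sInf (a '' Ioo t1 T) with hLdef
  have hlimL : Tendsto a (nhdsWithin T (Iio T)) (nhds L) :=
    (hanti.mono Ioo_subset_Ico_self).tendsto_nhdsWithin_Ioo_left hne1 hbddL
  have hL0 : 0 ≤ L := by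
    apply le_csInf (hne1.image a)
    rintro y ⟨x, hx, rfl⟩
    exact (hpos x (hmemT x hx)).le
  have hLzero : L = 0 := by
    by_contra hLne
    have hL : 0 < L := lt_of_le_of_ne hL0 (Ne.symm hLne)
    -- the velocity is bounded below by energy conservation, hence has a limit
    set C : ℝ := (deriv a 0) ^ 2 + 2 * kk * L⁻¹ with hC
    have hC0 : 0 ≤ C := by
      have h1 : 0 ≤ L⁻¹ := inv_nonneg.mpr hL.le
      have hkk : (0:ℝ) < kk := by positivity
      rw [hC]
      nlinarith [sq_nonneg (deriv a 0)]
    have hvbd : ∀ x ∈ Ioo t1 T, -Real.sqrt C ≤ deriv a x := by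
      intro x hx
      have hen := energy hT0 hpos hC2 hode ha0 x (hmemT x hx)
      have hax := hpos x (hmemT x hx)
      have haxL : L ≤ a x := csInf_le hbddL (mem_image_of_mem a hx)
      have hinv : (a x)⁻¹ ≤ L⁻¹ := by
        apply inv_anti₀ hL haxL
      have hkk : (0:ℝ) < kk := by positivity
      have hsq : (deriv a x) ^ 2 ≤ C := by
        rw [hC]
        nlinarith
      nlinarith [Real.sq_sqrt hC0, Real.sqrt_nonneg C,
        sq_nonneg (deriv a x + Real.sqrt C)]
    have hbddV : BddBelow (deriv a '' Ioo t1 T) := by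
      refine ⟨-Real.sqrt C, ?_⟩
      rintro y ⟨x, hx, rfl⟩
      exact hvbd x hx
    have hvanti : AntitoneOn (deriv a) (Ioo t1 T) := by
      apply ((hv_anti hpos hode).antitoneOn).mono
      intro x hx
      exact hmemT x hx
    have hlimV : Tendsto (deriv a) (nhdsWithin T (Iio T))
        (nhds (sInf (deriv a '' Ioo t1 T))) :=
      hvanti.tendsto_nhdsWithin_Ioo_left hne1 hbddV
    exact hcontra _ _ hL hlimL hlimV
  refine ⟨hTtop, by rw [← hLzero]; exact hlimL, ?_⟩
  -- the turning point
  by_cases hv00 : deriv a 0 ≤ 0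
  · refine ⟨0, le_rfl, hT0, ?_, ?_⟩
    · intro t ht1' ht2'
      exact absurd (lt_of_le_of_lt ht1' ht2') (lt_irrefl 0)
    · intro t htpos htT
      have := hv_anti hpos hode ⟨le_rfl, hT0⟩ ⟨htpos.le, htT⟩ htpos
      linarith
  · push_neg at hv00
    have ht1pos : 0 < t1 := by
      rcases eq_or_lt_of_le ht1mem.1 with h | h
      · rw [← h] at hv1; linarith
      · exact h
    have hcv : ContinuousOn (deriv a) (Icc 0 t1) := by
      intro x hx
      have hxm : x ∈ Ico (0:ℝ) T := ⟨hx.1, lt_of_le_of_lt hx.2 ht1mem.2⟩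
      exact ((hv_deriv' hpos hode x hxm).differentiableAt).continuousAt.continuousWithinAt
    have hivt := intermediate_value_Icc' ht1mem.1 hcv
    have h0mem : (0:ℝ) ∈ Icc (deriv a t1) (deriv a 0) := ⟨hv1.le, hv00.le⟩
    obtain ⟨ta, htam, htaeq⟩ := hivt h0mem
    have htaT : ta < T := lt_of_le_of_lt htam.2 ht1mem.2
    refine ⟨ta, htam.1, htaT, ?_, ?_⟩
    · intro t htpos htlt
      have htmem : t ∈ Ico (0:ℝ) T := ⟨htpos, htlt.trans htaT⟩
      have := hv_anti hpos hode htmem ⟨htam.1, htaT⟩ htlt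
      rw [htaeq] at this
      linarith
    · intro t htgt htT
      have htamem : ta ∈ Ico (0:ℝ) T := ⟨htam.1, htaT⟩
      have := hv_anti hpos hode htamem ⟨htam.1.trans htgt.le, htT⟩ htgt
      rw [htaeq] at this
      linarith
end
end
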